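/- For every λ ≥ 1 there exists β ≥ 1 with the following property. Let (b_j) be a (finite or infinite) sequence in a real Banach space and let (e_j) be its difference sequence, i.e. e_1 = b_1 and e_j = b_j − b_{j−1} for j > 1. Then: (a) if (b_j) is λ-wide-(s), then (e_j) is β-wide-(c); (b) if (e_j) is λ-wide-(c), then (b_j) is β-wide-(s). -/

import Mathlib

open Finset Filter Metric NormedSpace

noncomputable section

universe u

variable {X Y : Type*} [NormedAddCommGroup X] [NormedSpace ℝ X]
  [NormedAddCommGroup Y] [NormedSpace ℝ Y]

/-- `b` is a `lam`-basic sequence of length `N` (with `N = ⊤` the infinite case). -/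
def IsBasicLen (lam : ℝ) (N : ℕ∞) (b : ℕ → X) : Prop :=
  ∀ (c : ℕ → ℝ) (k n : ℕ), k ≤ n → (n : ℕ∞) ≤ N →
    ‖∑ j ∈ Finset.range k, c j • b j‖ ≤ lam * ‖∑ j ∈ Finset.range n, c j • b j‖

/-- `b` is a `lam`-wide-(s) sequence of length `N` (with `N = ⊤` the infinite case). -/
def IsWideSLen (lam : ℝ) (N : ℕ∞) (b : ℕ → X) : Prop :=
  IsBasicLen (2 * lam) N b ∧ (∀ j : ℕ, (j : ℕ∞) < N → ‖b j‖ ≤ lam) ∧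
    ∀ (c : ℕ → ℝ) (k n : ℕ), k ≤ n → (n : ℕ∞) ≤ N →
      |∑ j ∈ Finset.Ico k n, c j| ≤ lam * ‖∑ j ∈ Finset.range n, c j • b j‖

/-- `e` is a `lam`-wide-(c) sequence of length `N` (with `N = ⊤` the infinite case). -/
def IsWideCLen (lam : ℝ) (N : ℕ∞) (e : ℕ → X) : Prop :=
  IsBasicLen lam N e ∧ (∀ j : ℕ, (j : ℕ∞) < N → 1 / lam ≤ ‖e j‖) ∧
    ∀ k : ℕ, (k : ℕ∞) ≤ N → ‖∑ j ∈ Finset.range k, e j‖ ≤ lam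

/-! Writing `b i = e 0 + ⋯ + e i`, Abel summation turns an expansion in `b` into one in `e`:
`∑_{j<n} c j • b j = ∑_{i<n} (∑_{i ≤ j < n} c j) • e i`. Condition (c) of wide-(s) bounds exactly
these tail sums, which yields the basis constant of `e` and `‖e j‖ ≥ 1/λ`; conversely, for a
wide-(c) sequence `e` a single coefficient `T • e k` is the difference of two partial sums, so
`‖e k‖ ≥ 1/λ` bounds the tail sums `T`, and the bounded partial sums of `e` then give the basis
constant of `b`. All constants are polynomial in `λ`. -/

lemma ENat.natCast_lt_iff_succ_le {j : ℕ} {N : ℕ∞} : (j : ℕ∞) < N ↔ ((j + 1 : ℕ) : ℕ∞) ≤ N := by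
  rw [Nat.cast_succ, ENat.natCast_add_one_le_iff]

lemma Finset.sum_Ico_sub_succ {M : Type*} [AddCommGroup M] (a : ℕ → M) {k n : ℕ} (hkn : k ≤ n) :
    ∑ j ∈ Ico k n, (a j - a (j + 1)) = a k - a n := by
  rw [← neg_sub, ← Finset.sum_Ico_sub a hkn, ← Finset.sum_neg_distrib]
  simp only [neg_sub]

lemma IsBasicLen.mono {lam lam' : ℝ} {N : ℕ∞} {b : ℕ → X} (h : IsBasicLen lam N b)
    (hle : lam ≤ lam') : IsBasicLen lam' N b := fun c k n hkn hnN =>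
  (h c k n hkn hnN).trans (mul_le_mul_of_nonneg_right hle (norm_nonneg _))

lemma IsWideSLen.mono {lam lam' : ℝ} {N : ℕ∞} {b : ℕ → X} (h : IsWideSLen lam N b)
    (hle : lam ≤ lam') : IsWideSLen lam' N b :=
  ⟨h.1.mono (by linarith), fun j hj => (h.2.1 j hj).trans hle, fun c k n hkn hnN =>
    (h.2.2 c k n hkn hnN).trans (mul_le_mul_of_nonneg_right hle (norm_nonneg _))⟩

lemma IsWideCLen.mono {lam lam' : ℝ} {N : ℕ∞} {e : ℕ → X} (h : IsWideCLen lam N e)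
    (hlam : 0 < lam) (hle : lam ≤ lam') : IsWideCLen lam' N e :=
  ⟨h.1.mono hle, fun j hj => (one_div_le_one_div_of_le hlam hle).trans (h.2.1 j hj),
    fun k hk => (h.2.2 k hk).trans hle⟩

lemma sum_range_succ_eq_of_sub {E : Type*} [AddCommGroup E] {b e : ℕ → E} (h0 : e 0 = b 0)
    (hs : ∀ j, e (j + 1) = b (j + 1) - b j) (i : ℕ) : ∑ j ∈ range (i + 1), e j = b i := by
  induction i with
  | zero => simpa using h0
  | succ i ih => rw [Finset.sum_range_succ, ih, hs]; abel

section AbelSummation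

variable {E : Type*} [AddCommGroup E] [Module ℝ E] {b e : ℕ → E}
  (hb : ∀ i, ∑ j ∈ range (i + 1), e j = b i)
include hb

lemma sum_smul_eq_sum_sum_Ico_smul (c : ℕ → ℝ) (n : ℕ) :
    ∑ j ∈ range n, c j • b j = ∑ i ∈ range n, (∑ j ∈ Ico i n, c j) • e i := by
  simp_rw [Finset.sum_smul, Finset.range_eq_Ico]
  rw [Finset.sum_Ico_Ico_comm]
  refine Finset.sum_congr rfl fun j _ => ?_
  rw [← Finset.range_eq_Ico, ← Finset.smul_sum, hb j]

lemma sum_sub_succ_smul_eq (a : ℕ → ℝ) (n : ℕ) :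
    ∑ j ∈ range n, (a j - a (j + 1)) • b j = ∑ i ∈ range n, (a i - a n) • e i := by
  rw [sum_smul_eq_sum_sum_Ico_smul hb]
  exact Finset.sum_congr rfl fun i hi =>
    by rw [Finset.sum_Ico_sub_succ a (Finset.mem_range.mp hi).le]

end AbelSummation

section PartialSums

variable {lam : ℝ} {N : ℕ∞} {b e : ℕ → X} (hb : ∀ i, ∑ j ∈ range (i + 1), e j = b i)
include hb

lemma IsWideSLen.norm_sum_range_le (hS : IsWideSLen lam N b) (hlam : 0 ≤ lam) {k : ℕ}
    (hk : (k : ℕ∞) ≤ N) : ‖∑ j ∈ range k, e j‖ ≤ lam := by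
  cases k with
  | zero => simpa using hlam
  | succ m => exact hb m ▸ hS.2.1 m (ENat.natCast_lt_iff_succ_le.mpr hk)

lemma IsWideSLen.one_div_le_norm (hS : IsWideSLen lam N b) (hlam : 0 < lam) {j : ℕ}
    (hj : (j : ℕ∞) < N) : 1 / lam ≤ ‖e j‖ := by
  -- `e j` is the `b`-expansion with coefficients `δ_j - δ_{j-1}`, whose tail from `j` sums to `1`
  set a : ℕ → ℝ := fun i => if i = j then 1 else 0
  have h := hS.2.2 (fun i => a i - a (i + 1)) j (j + 1) (Nat.le_succ j)
    (ENat.natCast_lt_iff_succ_le.mp hj)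
  have hsum : ∑ i ∈ range (j + 1), (a i - a (j + 1)) • e i = e j := by
    simp [a, Finset.sum_ite_eq']
  rw [Finset.sum_Ico_sub_succ a (Nat.le_succ j), sum_sub_succ_smul_eq hb, hsum] at h
  rw [div_le_iff₀ hlam]
  simpa [a, mul_comm] using h

lemma IsWideSLen.isBasicLen (hS : IsWideSLen lam N b) (hlam : 0 ≤ lam) :
    IsBasicLen (2 * lam + lam ^ 2) N e := by
  intro c k n hkn hnN
  set a : ℕ → ℝ := fun i => if i < n then c i else 0
  set B : ℕ → X := fun m => ∑ j ∈ range m, (a j - a (j + 1)) • b j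
  have hB (m : ℕ) : B m = ∑ i ∈ range m, (a i - a m) • e i := sum_sub_succ_smul_eq hb a m
  have hBn : B n = ∑ i ∈ range n, c i • e i := by
    rw [hB]
    refine Finset.sum_congr rfl fun i hi => ?_
    simp [a, Finset.mem_range.mp hi]
  have hBk : ∑ i ∈ range k, c i • e i = B k + a k • ∑ i ∈ range k, e i := by
    rw [hB, Finset.smul_sum, ← Finset.sum_add_distrib]
    refine Finset.sum_congr rfl fun i hi => ?_
    simp [a, sub_smul, (Finset.mem_range.mp hi).trans_le hkn]
  have hak : |a k| ≤ lam * ‖B n‖ := by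
    simpa [Finset.sum_Ico_sub_succ a hkn, a] using hS.2.2 (fun i => a i - a (i + 1)) k n hkn hnN
  have hSk := hS.norm_sum_range_le hb hlam ((Nat.cast_le.mpr hkn).trans hnN)
  calc ‖∑ i ∈ range k, c i • e i‖
      ≤ ‖B k‖ + |a k| * ‖∑ i ∈ range k, e i‖ := by
        rw [hBk, ← Real.norm_eq_abs, ← norm_smul]; exact norm_add_le _ _
    _ ≤ 2 * lam * ‖B n‖ + lam * ‖B n‖ * lam := by
        gcongr
        exact hS.1 _ k n hkn hnN
    _ = (2 * lam + lam ^ 2) * ‖∑ i ∈ range n, c i • e i‖ := by rw [hBn]; ring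

lemma IsWideSLen.isWideCLen (hS : IsWideSLen lam N b) (hlam : 1 ≤ lam) :
    IsWideCLen (3 * lam ^ 2) N e := by
  have hlam0 : 0 < lam := by linarith
  have h2 : lam ≤ lam ^ 2 := le_self_pow₀ hlam (by norm_num)
  refine ⟨(hS.isBasicLen hb hlam0.le).mono (by linarith), fun j hj => ?_, fun k hk => ?_⟩
  · exact (one_div_le_one_div_of_le hlam0 (by linarith)).trans (hS.one_div_le_norm hb hlam0 hj)
  · exact (hS.norm_sum_range_le hb hlam0.le hk).trans (by linarith)

lemma IsWideCLen.norm_le (hC : IsWideCLen lam N e) {j : ℕ} (hj : (j : ℕ∞) < N) :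
    ‖b j‖ ≤ lam :=
  hb j ▸ hC.2.2 (j + 1) (ENat.natCast_lt_iff_succ_le.mp hj)

lemma IsWideCLen.abs_sum_Ico_le (hC : IsWideCLen lam N e) (hlam : 0 < lam) (c : ℕ → ℝ)
    {k n : ℕ} (hkn : k ≤ n) (hnN : (n : ℕ∞) ≤ N) :
    |∑ j ∈ Ico k n, c j| ≤ 2 * lam ^ 2 * ‖∑ j ∈ range n, c j • b j‖ := by
  rcases hkn.eq_or_lt with rfl | hkn
  · simp only [Finset.Ico_self, Finset.sum_empty, abs_zero]; positivity
  set T : ℕ → ℝ := fun i => ∑ j ∈ Ico i n, c j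
  have hY := sum_smul_eq_sum_sum_Ico_smul hb c n
  -- the `k`-th term of the expansion in `e` is a difference of two partial sums
  have hTk : ‖T k • e k‖ ≤ 2 * lam * ‖∑ j ∈ range n, c j • b j‖ := by
    rw [← Finset.sum_range_succ_sub_sum (fun i => T i • e i), hY, two_mul, add_mul]
    exact (norm_sub_le _ _).trans (add_le_add (hC.1 T _ n hkn hnN) (hC.1 T k n hkn.le hnN))
  have hek : 1 / lam ≤ ‖e k‖ := hC.2.1 k ((Nat.cast_lt.mpr hkn).trans_le hnN)
  rw [norm_smul, Real.norm_eq_abs] at hTk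
  have := (mul_le_mul_of_nonneg_left hek (abs_nonneg (T k))).trans hTk
  rw [mul_one_div, div_le_iff₀ hlam] at this
  linarith

lemma IsWideCLen.isBasicLen (hC : IsWideCLen lam N e) (hlam : 0 < lam) :
    IsBasicLen (lam + 2 * lam ^ 3) N b := by
  intro c k n hkn hnN
  set T : ℕ → ℝ := fun i => ∑ j ∈ Ico i n, c j
  set Y := ∑ j ∈ range n, c j • b j
  have hYk : ∑ j ∈ range k, c j • b j
      = ∑ i ∈ range k, T i • e i - T k • ∑ i ∈ range k, e i := by
    rw [sum_smul_eq_sum_sum_Ico_smul hb, Finset.smul_sum, ← Finset.sum_sub_distrib]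
    refine Finset.sum_congr rfl fun i hi => ?_
    rw [← sub_smul, eq_sub_of_add_eq (Finset.sum_Ico_consecutive c (Finset.mem_range.mp hi).le hkn)]
  have hTe : ‖∑ i ∈ range k, T i • e i‖ ≤ lam * ‖Y‖ := by
    simpa only [Y, sum_smul_eq_sum_sum_Ico_smul hb c n] using hC.1 T k n hkn hnN
  have hTk := hC.abs_sum_Ico_le hb hlam c hkn hnN
  have hSk := hC.2.2 k ((Nat.cast_le.mpr hkn).trans hnN)
  calc ‖∑ j ∈ range k, c j • b j‖
      ≤ lam * ‖Y‖ + |T k| * ‖∑ i ∈ range k, e i‖ := by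
        rw [hYk, ← Real.norm_eq_abs, ← norm_smul]; exact (norm_sub_le _ _).trans (by gcongr)
    _ ≤ lam * ‖Y‖ + 2 * lam ^ 2 * ‖Y‖ * lam := by gcongr
    _ = (lam + 2 * lam ^ 3) * ‖Y‖ := by ring

lemma IsWideCLen.isWideSLen (hC : IsWideCLen lam N e) (hlam : 1 ≤ lam) :
    IsWideSLen (2 * lam ^ 3) N b := by
  have hlam0 : 0 < lam := by linarith
  have h3 : lam ≤ lam ^ 3 := le_self_pow₀ hlam (by norm_num)
  have h23 : lam ^ 2 ≤ lam ^ 3 := pow_le_pow_right₀ hlam (by norm_num)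
  refine ⟨(hC.isBasicLen hb hlam0).mono (by linarith), fun j hj => ?_, fun c k n hkn hnN => ?_⟩
  · exact (hC.norm_le hb hj).trans (by linarith)
  · exact (hC.abs_sum_Ico_le hb hlam0 c hkn hnN).trans (by gcongr)

end PartialSums

theorem stmt_8 (lam : ℝ) (hlam : 1 ≤ lam) :
    ∃ β : ℝ, 1 ≤ β ∧
      ∀ (X : Type u) [NormedAddCommGroup X] [NormedSpace ℝ X] [CompleteSpace X],
        ∀ (N : ℕ∞) (b e : ℕ → X), e 0 = b 0 → (∀ j : ℕ, e (j + 1) = b (j + 1) - b j) →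
          (IsWideSLen lam N b → IsWideCLen β N e) ∧
          (IsWideCLen lam N e → IsWideSLen β N b) := by
  have h1 : 1 ≤ lam ^ 3 := one_le_pow₀ hlam
  have h23 : lam ^ 2 ≤ lam ^ 3 := pow_le_pow_right₀ hlam (by norm_num)
  refine ⟨3 * lam ^ 3, by linarith, fun X _ _ _ N b e h0 hs => ?_⟩
  have hb := sum_range_succ_eq_of_sub h0 hs
  exact ⟨fun hS => (hS.isWideCLen hb hlam).mono (by positivity) (by linarith),
    fun hC => (hC.isWideSLen hb hlam).mono (by linarith)⟩
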